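/- arXiv:1611.05537 — 3 statements merged into one kernel-verified Lean document; each statement's English description precedes it below -/
import Mathlib

section
/- For any binary De Bruijn sequence s of order k ≥ 4 (which has length n = 2^k), f(s) ≥ (n − log₂ n)/log₂ n. -/
/-- A tandem duplication: `x = a ++ b ++ c` becomes `y = a ++ b ++ b ++ c` with `b` nonempty. -/
def Dup (x y : List Bool) : Prop :=
  ∃ a b c : List Bool, b ≠ [] ∧ x = a ++ b ++ c ∧ y = a ++ (b ++ b) ++ c

/-- `DupSteps k x y` : `y` is obtained from `x` by exactly `k` tandem duplications. -/
def DupSteps : ℕ → List Bool → List Bool → Prop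
  | 0 => fun x y => x = y
  | k + 1 => fun x y => ∃ z, Dup x z ∧ DupSteps k z y

/-- A binary sequence is square-free if it contains no nonempty factor of the form `b ++ b`. -/
def SqFree (s : List Bool) : Prop :=
  ¬ ∃ a b c : List Bool, b ≠ [] ∧ s = a ++ (b ++ b) ++ c

/-- Duplication distance from `s` to its (square-free) root. -/
noncomputable def ddist (s : List Bool) : ℕ :=
  sInf {k | ∃ r : List Bool, SqFree r ∧ DupSteps k r s}

/-- `fmax n` : maximum duplication distance to the root over binary sequences of length `n`. -/
noncomputable def fmax (n : ℕ) : ℕ :=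
  sSup (ddist '' {s : List Bool | s.length = n})

/-- A binary De Bruijn sequence of order `k`: it has length `2^k` and, viewed cyclically,
contains every binary sequence of length `k` as a substring exactly once. -/
def DeBruijn (k : ℕ) (s : List Bool) : Prop :=
  s.length = 2 ^ k ∧
    ∀ w : List Bool, w.length = k →
      ∃! i : Fin s.length, w = ((s ++ s).drop (i : ℕ)).take k

/-!
Count the distinct factors of length `k`. A De Bruijn sequence of order `k` has `2^k + 1 - k` of
them, while a binary square-free word has length at most 3 and hence none when `k ≥ 4`. A tandem
duplication `abc ↦ abbc` creates at most `k - 1` new ones, namely those straddling the junction of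
the two copies of `b`. Hence `f(s) (k - 1) ≥ 2^k + 1 - k`, which is stronger than the claim.
-/

section Windows

variable {α : Type*}

def windows [DecidableEq α] (k : ℕ) (x : List α) : Finset (List α) :=
  (Finset.range (x.length + 1 - k)).image fun i => (x.drop i).take k

lemma card_windows_le [DecidableEq α] (k : ℕ) (x : List α) :
    (windows k x).card ≤ x.length + 1 - k :=
  Finset.card_image_le.trans (Finset.card_range _).le

lemma List.take_drop_append_of_add_le_length {p q : List α} {i k : ℕ} (h : i + k ≤ p.length) :
    ((p ++ q).drop i).take k = (p.drop i).take k := by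
  rw [List.drop_append_of_le_length (by omega), List.take_append_of_le_length (by simp; omega)]

lemma List.drop_append_of_length_le {p q : List α} {i : ℕ} (h : p.length ≤ i) :
    (p ++ q).drop i = q.drop (i - p.length) := by
  rw [List.drop_append, List.drop_eq_nil_of_le h, List.nil_append]

lemma card_windows_append_dup_le [DecidableEq α] (k : ℕ) (a b c : List α) :
    (windows k (a ++ (b ++ b) ++ c)).card ≤ (windows k (a ++ b ++ c)).card + (k - 1) := by
  set y := a ++ (b ++ b) ++ c
  have hy : y = (a ++ b) ++ (b ++ c) := by simp [y]
  have hx : a ++ b ++ c = a ++ (b ++ c) := List.append_assoc ..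
  have hylen : y.length = a.length + b.length + b.length + c.length := by simp [y]; omega
  set crossing := (Finset.Ico (a.length + b.length + 1 - k) (a.length + b.length)).image
    fun i => (y.drop i).take k
  have hsub : windows k y ⊆ windows k (a ++ b ++ c) ∪ crossing := by
    intro w hw
    obtain ⟨i, hi, rfl⟩ := Finset.mem_image.mp hw
    rw [Finset.mem_range] at hi
    simp only [windows, crossing, Finset.mem_union, Finset.mem_image, Finset.mem_range,
      Finset.mem_Ico, List.length_append]
    rcases le_or_gt (i + k) (a.length + b.length) with hleft | hcross
    · refine .inl ⟨i, by omega, ?_⟩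
      have hab : i + k ≤ (a ++ b).length := by simpa using hleft
      rw [hy, List.take_drop_append_of_add_le_length (p := a ++ b) hab,
        List.take_drop_append_of_add_le_length (p := a ++ b) hab]
    rcases le_or_gt (a.length + b.length) i with hright | hcross'
    · refine .inl ⟨i - b.length, by omega, ?_⟩
      have hab : (a ++ b).length ≤ i := by simpa using hright
      rw [hx, hy, List.drop_append_of_length_le (p := a) (by omega),
        List.drop_append_of_length_le (p := a ++ b) hab, List.length_append]
      congr 2
      omega
    · exact .inr ⟨i, ⟨by omega, hcross'⟩, rfl⟩
  calc (windows k y).card ≤ (windows k (a ++ b ++ c) ∪ crossing).card := Finset.card_le_card hsub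
    _ ≤ (windows k (a ++ b ++ c)).card + crossing.card := Finset.card_union_le _ _
    _ ≤ (windows k (a ++ b ++ c)).card + (k - 1) := by
        gcongr
        exact Finset.card_image_le.trans (by rw [Nat.card_Ico]; omega)

end Windows

lemma Dup.card_windows_le {x y : List Bool} (h : Dup x y) (k : ℕ) :
    (windows k y).card ≤ (windows k x).card + (k - 1) := by
  obtain ⟨a, b, c, -, rfl, rfl⟩ := h
  exact card_windows_append_dup_le k a b c

lemma DupSteps.card_windows_le (k : ℕ) :
    ∀ {m : ℕ} {x y : List Bool}, DupSteps m x y →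
      (windows k y).card ≤ (windows k x).card + m * (k - 1)
  | 0, _, _, rfl => by simp
  | m + 1, _, _, ⟨z, hxz, hzy⟩ => by
    have := hxz.card_windows_le k
    have := hzy.card_windows_le k
    rw [add_one_mul]
    omega

lemma DupSteps.snoc : ∀ {m : ℕ} {x y z : List Bool}, DupSteps m x y → Dup y z →
    DupSteps (m + 1) x z
  | 0, _, _, _, rfl, hyz => ⟨_, hyz, rfl⟩
  | _ + 1, _, _, _, ⟨w, hxw, hwy⟩, hyz => ⟨w, hxw, hwy.snoc hyz⟩

lemma exists_sqFree_dupSteps (s : List Bool) : ∃ m r, SqFree r ∧ DupSteps m r s := by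
  by_cases hs : SqFree s
  · exact ⟨0, s, hs, rfl⟩
  obtain ⟨a, b, c, hb, hsq⟩ := not_not.mp hs
  have : (a ++ b ++ c).length < s.length := by simp [hsq, List.length_pos_iff.mpr hb]
  obtain ⟨m, r, hr, hrs⟩ := exists_sqFree_dupSteps (a ++ b ++ c)
  exact ⟨m + 1, r, hr, hrs.snoc ⟨a, b, c, hb, rfl, hsq⟩⟩
termination_by s.length
decreasing_by simpa [Nat.add_assoc] using this

lemma exists_sqFree_dupSteps_ddist (s : List Bool) : ∃ r, SqFree r ∧ DupSteps (ddist s) r s := by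
  obtain ⟨m, hm⟩ := exists_sqFree_dupSteps s
  exact Nat.sInf_mem (s := {m | ∃ r, SqFree r ∧ DupSteps m r s}) ⟨m, hm⟩

lemma SqFree.length_le_three {r : List Bool} (h : SqFree r) : r.length ≤ 3 := by
  -- a binary word without two equal neighbours alternates, so its first four letters form a square
  match r with
  | [] | [_] | [_, _] | [_, _, _] => simp
  | x :: y :: z :: w :: t =>
    refine absurd ?_ h
    by_cases hxy : x = y
    · exact ⟨[], [x], z :: w :: t, by simp, by simp [hxy]⟩
    by_cases hyz : y = z
    · exact ⟨[x], [y], w :: t, by simp, by simp [hyz]⟩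
    by_cases hzw : z = w
    · exact ⟨[x, y], [z], t, by simp, by simp [hzw]⟩
    have hzx : z = x := by revert hxy hyz; cases x <;> cases y <;> cases z <;> simp
    have hwy : w = y := by revert hyz hzw; cases y <;> cases z <;> cases w <;> simp
    exact ⟨[], [x, y], t, by simp, by simp [hzx, hwy]⟩

lemma DeBruijn.card_windows {k : ℕ} {s : List Bool} (hs : DeBruijn k s) (hk : 0 < k) :
    (windows k s).card = 2 ^ k + 1 - k := by
  obtain ⟨hlen, hunique⟩ := hs
  have hks : k ≤ s.length := hlen ▸ Nat.lt_two_pow_self.le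
  have hcyclic : ∀ i < s.length + 1 - k, ((s ++ s).drop i).take k = (s.drop i).take k :=
    fun i hi => List.take_drop_append_of_add_le_length (by omega)
  rw [← hlen, windows]
  refine (Finset.card_image_of_injOn fun i hi j hj hij => ?_).trans (Finset.card_range _)
  simp only [Finset.coe_range, Set.mem_Iio] at hi hj
  obtain ⟨_, -, hfirst⟩ := hunique ((s.drop i).take k) (by simp; omega)
  have hi' := hfirst ⟨i, by omega⟩ (hcyclic i hi).symm
  have hj' := hfirst ⟨j, by omega⟩ (hij.trans (hcyclic j hj).symm)
  simpa using hi'.trans hj'.symm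

lemma DeBruijn.le_ddist_mul {k : ℕ} (hk : 4 ≤ k) {s : List Bool} (hs : DeBruijn k s) :
    2 ^ k + 1 - k ≤ ddist s * (k - 1) := by
  obtain ⟨r, hr, hrs⟩ := exists_sqFree_dupSteps_ddist s
  have hroot : (windows k r).card = 0 := by
    have := card_windows_le k r
    have := hr.length_le_three
    omega
  have hgrowth := hrs.card_windows_le k
  rw [hs.card_windows (by omega), hroot] at hgrowth
  omega

theorem deBruijn_lower_bound (k : ℕ) (hk : 4 ≤ k) (s : List Bool) (hs : DeBruijn k s) :
    (((2 : ℝ) ^ k) - Real.logb 2 ((2 : ℝ) ^ k)) / Real.logb 2 ((2 : ℝ) ^ k) ≤ ddist s := by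
  have hbound : 2 ^ k ≤ ddist s * k + k := by
    have := hs.le_ddist_mul hk
    have := Nat.mul_le_mul_left (ddist s) (Nat.sub_le k 1)
    omega
  rw [Real.logb_pow, Real.logb_self_eq_one one_lt_two, mul_one, div_le_iff₀ (by positivity)]
  have : (2 : ℝ) ^ k ≤ ddist s * k + k := by exact_mod_cast hbound
  linarith
end

section
/- For any binary D0L-system with initiator ω and production rule h such that h^r(ω) is nonempty for every r ≥ 0, one has f(h^r(ω)) ≤ f(h^{r−1}(ω)) + c for every r ≥ 1, and hence f(h^r(ω)) ≤ f(ω) + r·c, where c = max{f(h(z)) : z ∈ {0, 1, 01, 10, 010, 101}}. -/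
/-- The morphism of a binary D0L-system determined by `h0 = h(0)` and `h1 = h(1)`. -/
def hmap (h0 h1 : List Bool) (s : List Bool) : List Bool :=
  s.flatMap (fun b => if b then h1 else h0)

/-- The `r`-fold iterate of the production rule applied to a sequence. -/
def hiter (h0 h1 : List Bool) : ℕ → List Bool → List Bool
  | 0, s => s
  | r + 1, s => hmap h0 h1 (hiter h0 h1 r s)

lemma dup_ne_nil {x y : List Bool} (h : Dup x y) : x ≠ [] := by
  obtain ⟨a, b, c, hb, hx, _⟩ := h
  intro h0
  rw [h0] at hx
  have hl := congrArg List.length hx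
  simp at hl
  exact hb (List.eq_nil_of_length_eq_zero (by omega))

lemma dupSteps_trans : ∀ {m k : ℕ} {a b c : List Bool},
    DupSteps m a b → DupSteps k b c → DupSteps (m + k) a c := by
  intro m
  induction m with
  | zero => intro k a b c h1 h2; rw [Nat.zero_add]; cases h1; exact h2
  | succ n ih =>
    intro k a b c h1 h2
    obtain ⟨z, hd, hs⟩ := h1
    rw [Nat.succ_add]
    exact ⟨z, hd, ih hs h2⟩

lemma dupSteps_nil : ∀ {k : ℕ} {s : List Bool}, DupSteps k [] s → s = [] := by
  intro k
  induction k with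
  | zero => intro s h; exact h.symm
  | succ n ih => intro s h; obtain ⟨z, hd, _⟩ := h; exact absurd rfl (dup_ne_nil hd)

lemma hmap_append (h0 h1 a b : List Bool) :
    hmap h0 h1 (a ++ b) = hmap h0 h1 a ++ hmap h0 h1 b := by
  simp [hmap]

lemma hmap_ne_nil {h0 h1 : List Bool} (hh0 : h0 ≠ []) (hh1 : h1 ≠ [])
    {s : List Bool} (hs : s ≠ []) : hmap h0 h1 s ≠ [] := by
  rcases s with _ | ⟨b, t⟩
  · exact absurd rfl hs
  · cases b <;> simp [hmap, hh0, hh1]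

lemma dup_hmap {h0 h1 : List Bool} (hh0 : h0 ≠ []) (hh1 : h1 ≠ [])
    {x y : List Bool} (h : Dup x y) : Dup (hmap h0 h1 x) (hmap h0 h1 y) := by
  obtain ⟨a, b, c, hb, hx, hy⟩ := h
  exact ⟨hmap h0 h1 a, hmap h0 h1 b, hmap h0 h1 c,
    hmap_ne_nil hh0 hh1 hb,
    by rw [hx, hmap_append, hmap_append],
    by rw [hy, hmap_append, hmap_append, hmap_append]⟩

lemma dupSteps_hmap {h0 h1 : List Bool} (hh0 : h0 ≠ []) (hh1 : h1 ≠ []) :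
    ∀ {k : ℕ} {x y : List Bool}, DupSteps k x y →
      DupSteps k (hmap h0 h1 x) (hmap h0 h1 y) := by
  intro k
  induction k with
  | zero => intro x y h; cases h; rfl
  | succ n ih =>
    intro x y h
    obtain ⟨z, hd, hs⟩ := h
    exact ⟨hmap h0 h1 z, dup_hmap hh0 hh1 hd, ih hs⟩

lemma exists_root (s : List Bool) : ∃ k ρ, SqFree ρ ∧ DupSteps k ρ s := by
  generalize hn : s.length = n
  induction n using Nat.strong_induction_on generalizing s with
  | _ n ih =>
    by_cases hs : SqFree s
    · exact ⟨0, s, hs, rfl⟩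
    · rw [SqFree, not_not] at hs
      obtain ⟨a, b, c, hb, hsq⟩ := hs
      have hlen : (a ++ b ++ c).length < n := by
        subst hn
        rw [hsq]
        have : 0 < b.length := List.length_pos_iff.mpr hb
        simp
        omega
      obtain ⟨k, ρ, hρ, hst⟩ := ih _ hlen (a ++ b ++ c) rfl
      refine ⟨k + 1, ρ, hρ, ?_⟩
      have h1 : DupSteps 1 (a ++ b ++ c) s := ⟨s, ⟨a, b, c, hb, rfl, hsq⟩, rfl⟩
      exact dupSteps_trans hst h1

lemma ddist_le {s : List Bool} {k : ℕ} (h : ∃ ρ, SqFree ρ ∧ DupSteps k ρ s) :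
    ddist s ≤ k := Nat.sInf_le h

lemma ddist_spec (s : List Bool) : ∃ ρ, SqFree ρ ∧ DupSteps (ddist s) ρ s := by
  have : {k | ∃ r : List Bool, SqFree r ∧ DupSteps k r s}.Nonempty := by
    obtain ⟨k, ρ, h1, h2⟩ := exists_root s
    exact ⟨k, ρ, h1, h2⟩
  exact Nat.sInf_mem this

lemma sqfree_classify (s : List Bool) (hs : SqFree s) (hne : s ≠ []) :
    s = [false] ∨ s = [true] ∨ s = [false, true] ∨ s = [true, false] ∨
    s = [false, true, false] ∨ s = [true, false, true] := by
  rcases s with _ | ⟨b0, _ | ⟨b1, rest⟩⟩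
  · exact absurd rfl hne
  · cases b0 <;> simp
  · cases b0 <;> cases b1
    · exact absurd ⟨[], [false], rest, by simp, by simp⟩ hs
    · -- false :: true :: rest
      rcases rest with _ | ⟨b2, rest2⟩
      · simp
      · cases b2
        · rcases rest2 with _ | ⟨b3, r3⟩
          · simp
          · cases b3
            · exact absurd ⟨[false, true], [false], r3, by simp, by simp⟩ hs
            · exact absurd ⟨[], [false, true], r3, by simp, by simp⟩ hs
        · exact absurd ⟨[false], [true], rest2, by simp, by simp⟩ hs
    · -- true :: false :: rest
      rcases rest with _ | ⟨b2, rest2⟩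
      · simp
      · cases b2
        · exact absurd ⟨[true], [false], rest2, by simp, by simp⟩ hs
        · rcases rest2 with _ | ⟨b3, r3⟩
          · simp
          · cases b3
            · exact absurd ⟨[], [true, false], r3, by simp, by simp⟩ hs
            · exact absurd ⟨[true, false], [true], r3, by simp, by simp⟩ hs
    · exact absurd ⟨[], [true], rest, by simp, by simp⟩ hs

lemma dupSteps_nil_root {k : ℕ} {ρ s : List Bool} (h : DupSteps k ρ s) (hs : s ≠ []) :
    ρ ≠ [] := by
  intro h0; subst h0; exact hs (dupSteps_nil h)

lemma step_lemma {h0 h1 : List Bool} (hh0 : h0 ≠ []) (hh1 : h1 ≠ []) (c : ℕ)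
    (hc : c = max (ddist (hmap h0 h1 [false]))
          (max (ddist (hmap h0 h1 [true]))
          (max (ddist (hmap h0 h1 [false, true]))
          (max (ddist (hmap h0 h1 [true, false]))
          (max (ddist (hmap h0 h1 [false, true, false]))
               (ddist (hmap h0 h1 [true, false, true])))))))
    (x : List Bool) (hx : x ≠ []) :
    ddist (hmap h0 h1 x) ≤ ddist x + c := by
  obtain ⟨ρ, hρ, hst⟩ := ddist_spec x
  have hρne : ρ ≠ [] := dupSteps_nil_root hst hx
  have hρc : ddist (hmap h0 h1 ρ) ≤ c := by
    rcases sqfree_classify ρ hρ hρne with h | h | h | h | h | h <;> subst h <;>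
      rw [hc] <;> omega
  obtain ⟨σ, hσ, hσst⟩ := ddist_spec (hmap h0 h1 ρ)
  have h2 : DupSteps (ddist x) (hmap h0 h1 ρ) (hmap h0 h1 x) := dupSteps_hmap hh0 hh1 hst
  have h3 : DupSteps (ddist (hmap h0 h1 ρ) + ddist x) σ (hmap h0 h1 x) :=
    dupSteps_trans hσst h2
  have h4 : ddist (hmap h0 h1 x) ≤ ddist (hmap h0 h1 ρ) + ddist x :=
    ddist_le ⟨σ, hσ, h3⟩
  omega

theorem d0L_distance_recursion (h0 h1 : List Bool) (hh0 : h0 ≠ []) (hh1 : h1 ≠ [])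
    (ω : List Bool) (hω : ω ≠ []) (c : ℕ)
    (hc : c = max (ddist (hmap h0 h1 [false]))
          (max (ddist (hmap h0 h1 [true]))
          (max (ddist (hmap h0 h1 [false, true]))
          (max (ddist (hmap h0 h1 [true, false]))
          (max (ddist (hmap h0 h1 [false, true, false]))
               (ddist (hmap h0 h1 [true, false, true]))))))) :
    ∀ r : ℕ, 1 ≤ r →
      ddist (hiter h0 h1 r ω) ≤ ddist (hiter h0 h1 (r - 1) ω) + c ∧
      ddist (hiter h0 h1 r ω) ≤ ddist ω + r * c := by
  have hne : ∀ n : ℕ, hiter h0 h1 n ω ≠ [] := by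
    intro n
    induction n with
    | zero => exact hω
    | succ m ih => exact hmap_ne_nil hh0 hh1 ih
  have hstep : ∀ n : ℕ, ddist (hiter h0 h1 (n + 1) ω) ≤ ddist (hiter h0 h1 n ω) + c := by
    intro n
    exact step_lemma hh0 hh1 c hc (hiter h0 h1 n ω) (hne n)
  have hmain : ∀ n : ℕ, ddist (hiter h0 h1 n ω) ≤ ddist ω + n * c := by
    intro n
    induction n with
    | zero => simp [hiter]
    | succ m ih =>
      have := hstep m
      have hmul : (m + 1) * c = m * c + c := by ring
      omega
  intro r hr
  obtain ⟨m, rfl⟩ : ∃ m, r = m + 1 := ⟨r - 1, by omega⟩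
  refine ⟨?_, hmain (m + 1)⟩
  simpa using hstep m
end

section
/- For every r ≥ 2, the r-th Thue–Morse word t_r satisfies f(t_r) ≤ 2r. -/
/-- The Thue–Morse words: `tm 0 = 0` and `tm (i+1)` is `tm i` followed by its complement. -/
def tm : ℕ → List Bool
  | 0 => [false]
  | i + 1 => tm i ++ (tm i).map (fun b => !b)

lemma dupSteps_trans_s13 : ∀ {k l : ℕ} {x y z : List Bool},
    DupSteps k x y → DupSteps l y z → DupSteps (k + l) x z := by
  intro k
  induction k with
  | zero => intro l x y z h1 h2; cases h1; simpa using h2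
  | succ k ih =>
    intro l x y z h1 h2
    obtain ⟨w, hd, hs⟩ := h1
    have e : k + 1 + l = (k + l) + 1 := by omega
    rw [e]
    exact ⟨w, hd, ih hs h2⟩

lemma tm_ne_nil : ∀ n, tm n ≠ [] := by
  intro n
  cases n with
  | zero => simp [tm]
  | succ m => simp [tm, tm_ne_nil m]

lemma tm_succ (n : ℕ) : tm (n + 1) = tm n ++ (tm n).map (fun b => !b) := rfl

lemma comp_tm_succ (n : ℕ) :
    (tm (n + 1)).map (fun b => !b) = (tm n).map (fun b => !b) ++ tm n := by
  simp [tm_succ, List.map_map, Function.comp_def]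

lemma map_not_not (l : List Bool) :
    (l.map (fun b => !b)).map (fun b => !b) = l := by
  simp [List.map_map, Function.comp_def]

lemma step4 (m : ℕ) : DupSteps 4 (tm (m + 1)) (tm (m + 3)) := by
  have h2 : tm (m + 2) = (tm m ++ (tm m).map (fun b => !b)) ++
      ((tm m).map (fun b => !b) ++ tm m) := by
    have e : m + 2 = m + 1 + 1 := rfl
    rw [e]; simp only [tm_succ, List.map_append, map_not_not]
  have h3 : tm (m + 3) = ((tm m ++ (tm m).map (fun b => !b)) ++
      ((tm m).map (fun b => !b) ++ tm m)) ++
      (((tm m).map (fun b => !b) ++ tm m) ++ (tm m ++ (tm m).map (fun b => !b))) := by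
    have e : m + 3 = m + 1 + 1 + 1 := rfl
    rw [e]; simp only [tm_succ, List.map_append, map_not_not]
  set T := tm m with hTdef
  set C := T.map (fun b => !b) with hCdef
  have hT : T ≠ [] := tm_ne_nil m
  have hC : C ≠ [] := by simp [hCdef, hT]
  have h1 : tm (m + 1) = T ++ C := rfl
  refine ⟨(T ++ C) ++ (T ++ C),
    ⟨[], T ++ C, [], by simp [hT], by simp [h1], by simp⟩, ?_⟩
  refine ⟨T ++ (C ++ C) ++ (T ++ C),
    ⟨T, C, T ++ C, hC, by simp, by simp⟩, ?_⟩
  refine ⟨(T ++ C ++ C) ++ (T ++ T) ++ C,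
    ⟨T ++ C ++ C, T, C, hT, by simp, by simp⟩, ?_⟩
  refine ⟨tm (m + 3),
    ⟨T ++ C, C ++ T, T ++ C, by simp [hC], by simp, by simp [h3]⟩, rfl⟩

lemma sqfree_of_len_le_three (s : List Bool) (hlen : s.length ≤ 3)
    (hadj : ∀ a x c, s ≠ a ++ [x, x] ++ c) : SqFree s := by
  rintro ⟨a, b, c, hb, h⟩
  have hlb : 1 ≤ b.length := List.length_pos_iff.mpr hb
  have hl : a.length + (b.length + b.length) + c.length = 3 ∨
      a.length + (b.length + b.length) + c.length ≤ 3 := by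
    right
    have := congrArg List.length h
    simp at this
    omega
  have hb1 : b.length = 1 := by
    have := congrArg List.length h
    simp at this
    omega
  obtain ⟨x, hx⟩ := List.length_eq_one_iff.mp hb1
  subst hx
  exact hadj a x c (by simpa using h)

lemma sqfree_010 : SqFree [false, true, false] := by
  apply sqfree_of_len_le_three _ (by simp)
  intro a x c h
  rcases a with - | ⟨y, - | ⟨z, a⟩⟩
  · cases x <;> simp at h
  · cases x <;> simp at h
  · have := congrArg List.length h
    simp at this
    omega

lemma sqfree_01 : SqFree [false, true] := by
  apply sqfree_of_len_le_three _ (by simp)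
  intro a x c h
  rcases a with - | ⟨y, a⟩
  · cases x <;> simp at h
  · have := congrArg List.length h
    simp at this
    omega

lemma tm2_val : tm 2 = [false, true, true, false] := by decide
lemma tm3_val : tm 3 = [false, true, true, false, true, false, false, true] := by decide

lemma base2 : DupSteps 1 [false, true, false] (tm 2) := by
  rw [tm2_val]
  exact ⟨[false, true, true, false],
    ⟨[false], [true], [false], by simp, rfl, rfl⟩, rfl⟩

lemma base3 : DupSteps 4 [false, true] (tm 3) := by
  rw [tm3_val]
  refine ⟨[false, true, false, true],
    ⟨[], [false, true], [], by simp, rfl, rfl⟩, ?_⟩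
  refine ⟨[false, true, true, false, true],
    ⟨[false], [true], [false, true], by simp, rfl, rfl⟩, ?_⟩
  refine ⟨[false, true, true, false, true, false, true],
    ⟨[false, true, true], [false, true], [], by simp, rfl, rfl⟩, ?_⟩
  exact ⟨[false, true, true, false, true, false, false, true],
    ⟨[false, true, true, false, true], [false], [true], by simp, rfl, rfl⟩, rfl⟩

lemma exists_steps : ∀ r : ℕ, 2 ≤ r →
    ∃ ρ k, SqFree ρ ∧ DupSteps k ρ (tm r) ∧ k ≤ 2 * r := by
  intro r
  induction r using Nat.strong_induction_on with
  | _ r ih =>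
    match r with
    | 0 => exact fun h => absurd h (by omega)
    | 1 => exact fun h => absurd h (by omega)
    | 2 => exact fun _ => ⟨[false, true, false], 1, sqfree_010, base2, by omega⟩
    | 3 => exact fun _ => ⟨[false, true], 4, sqfree_01, base3, by omega⟩
    | (m + 4) =>
      intro _
      obtain ⟨ρ, k, hs, hd, hk⟩ := ih (m + 2) (by omega) (by omega)
      refine ⟨ρ, k + 4, hs, ?_, by omega⟩
      have : m + 4 = (m + 1) + 3 := by omega
      rw [this]
      exact dupSteps_trans_s13 hd (step4 (m + 1))

theorem thueMorse_distance_bound (r : ℕ) (hr : 2 ≤ r) : ddist (tm r) ≤ 2 * r := by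
  obtain ⟨ρ, k, hs, hd, hk⟩ := exists_steps r hr
  refine le_trans (Nat.sInf_le ?_) hk
  exact ⟨ρ, hs, hd⟩
end
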